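/- arXiv:2508.04870 — 12 statements merged into one kernel-verified Lean document; each statement's English description precedes it below -/
import Mathlib

section
/- For every real v ≥ 0, the number u := √(v²+2v+2) − v − 1 satisfies 0 < u < 1, it is a root of the equation 2u² + 4u + 4uv − 2 = 0, and it makes the two case functions equal: g₁(u) = g₂(u) = (√(v²+2v+2)+1)/(√(v²+2v+2)−1). -/
/-- For every real `v ≥ 0`, the number `u := √(v²+2v+2) − v − 1` satisfies `0 < u < 1`,
it is a root of `2u² + 4u + 4uv − 2 = 0`, and it makes the two case functions
`g₁(u) = (2+v+u)/(u+v)` and `g₂(u) = ((1−v)u+3+v)/((1+v)(1−u))` equal to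
`(√(v²+2v+2)+1)/(√(v²+2v+2)−1)`. -/
theorem stmt0 (v : ℝ) (hv : 0 ≤ v) :
    let u := Real.sqrt (v ^ 2 + 2 * v + 2) - v - 1
    0 < u ∧ u < 1 ∧
    2 * u ^ 2 + 4 * u + 4 * u * v - 2 = 0 ∧
    (2 + v + u) / (u + v)
      = (Real.sqrt (v ^ 2 + 2 * v + 2) + 1) / (Real.sqrt (v ^ 2 + 2 * v + 2) - 1) ∧
    ((1 - v) * u + 3 + v) / ((1 + v) * (1 - u))
      = (Real.sqrt (v ^ 2 + 2 * v + 2) + 1) / (Real.sqrt (v ^ 2 + 2 * v + 2) - 1) := by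
  intro u
  set s := Real.sqrt (v ^ 2 + 2 * v + 2) with hs
  have hnn : (0:ℝ) ≤ v ^ 2 + 2 * v + 2 := by nlinarith
  have hs0 : 0 ≤ s := Real.sqrt_nonneg _
  have hs2 : s ^ 2 = v ^ 2 + 2 * v + 2 := Real.sq_sqrt hnn
  have hgt : v + 1 < s := by nlinarith
  have hlt : s < v + 2 := by nlinarith
  have hu : u = s - v - 1 := rfl
  refine ⟨by simp [hu]; linarith, by simp [hu]; linarith, by nlinarith [hs2], ?_, ?_⟩
  · rw [hu]
    have h1 : s - v - 1 + v = s - 1 := by ring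
    have h2 : 2 + v + (s - v - 1) = s + 1 := by ring
    rw [h1, h2]
  · rw [hu, div_eq_div_iff]
    · nlinarith [hs2]
    · nlinarith
    · linarith
end

section
/- For every real v ≥ 0 and every u ∈ (0,1), max(g₁(u), g₂(u)) ≥ (√(v²+2v+2)+1)/(√(v²+2v+2)−1); that is, the competitive ratio (√(v²+2v+2)+1)/(√(v²+2v+2)−1) of Algorithm NoDistanceTowardOppositeDirection is the minimum over u ∈ (0,1) of the worst of the two case values. -/
/-- For every real `v ≥ 0` and every `u ∈ (0,1)`,
`max(g₁(u), g₂(u)) ≥ (√(v²+2v+2)+1)/(√(v²+2v+2)−1)`. -/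
theorem stmt2 (v u : ℝ) (hv : 0 ≤ v) (hu : u ∈ Set.Ioo (0 : ℝ) 1) :
    (Real.sqrt (v ^ 2 + 2 * v + 2) + 1) / (Real.sqrt (v ^ 2 + 2 * v + 2) - 1)
      ≤ max ((2 + v + u) / (u + v)) (((1 - v) * u + 3 + v) / ((1 + v) * (1 - u))) := by
  obtain ⟨hu0, hu1⟩ := hu
  set s := Real.sqrt (v ^ 2 + 2 * v + 2) with hs
  have hs2 : s ^ 2 = v ^ 2 + 2 * v + 2 := Real.sq_sqrt (by nlinarith)
  have hs0 : 0 ≤ s := Real.sqrt_nonneg _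
  have hs1 : 1 < s := by nlinarith
  rcases le_or_gt u (s - v - 1) with h | h
  · refine le_max_of_le_left ?_
    rw [div_le_div_iff₀ (by linarith) (by linarith)]
    nlinarith
  · refine le_max_of_le_right ?_
    rw [div_le_div_iff₀ (by linarith) (by nlinarith)]
    nlinarith [mul_nonneg (le_of_lt (by linarith : (0:ℝ) < u - (s - v - 1))) (by linarith : (0:ℝ) ≤ 2 * s + 2 * v)]
end

section
/- For every real v with 0 ≤ v < 1, the number u := v − 1 + √(v²−2v+2) satisfies v < u < 1, it is a root of the equation 2u² + 4u − 4uv − 2 = 0, and it makes the two case functions equal: h₁(u) = h₂(u) = (√(v²−2v+2)+1)/(√(v²−2v+2)−1). -/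
/-- For every real `v` with `0 ≤ v < 1`, the number `u := v − 1 + √(v²−2v+2)` satisfies
`v < u < 1`, it is a root of `2u² + 4u − 4uv − 2 = 0`, and it makes the two case functions
`h₁(u) = (2−v+u)/(u−v)` and `h₂(u) = (3−v+u+vu)/((1−v)(1−u))` equal to
`(√(v²−2v+2)+1)/(√(v²−2v+2)−1)`. -/
theorem stmt3 (v : ℝ) (hv0 : 0 ≤ v) (hv1 : v < 1) :
    let u := v - 1 + Real.sqrt (v ^ 2 - 2 * v + 2)
    v < u ∧ u < 1 ∧
    2 * u ^ 2 + 4 * u - 4 * u * v - 2 = 0 ∧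
    (2 - v + u) / (u - v)
      = (Real.sqrt (v ^ 2 - 2 * v + 2) + 1) / (Real.sqrt (v ^ 2 - 2 * v + 2) - 1) ∧
    (3 - v + u + v * u) / ((1 - v) * (1 - u))
      = (Real.sqrt (v ^ 2 - 2 * v + 2) + 1) / (Real.sqrt (v ^ 2 - 2 * v + 2) - 1) := by
  intro u
  set s := Real.sqrt (v ^ 2 - 2 * v + 2) with hs
  have hpos : (0:ℝ) < v ^ 2 - 2 * v + 2 := by nlinarith
  have hs2 : s ^ 2 = v ^ 2 - 2 * v + 2 := Real.sq_sqrt hpos.le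
  have hs0 : 0 ≤ s := Real.sqrt_nonneg _
  have hs1 : 1 < s := by nlinarith
  have hu : u = v - 1 + s := rfl
  refine ⟨by rw [hu]; linarith, by rw [hu]; nlinarith, by rw [hu]; nlinarith, ?_, ?_⟩
  · rw [hu, div_eq_div_iff (by linarith) (by linarith)]
    ring
  · rw [hu, div_eq_div_iff (by nlinarith) (by linarith)]
    ring_nf
    nlinarith
end

section
/- For every real v with 0 ≤ v < 1 and every u ∈ (v,1), max(h₁(u), h₂(u)) ≥ (√(v²−2v+2)+1)/(√(v²−2v+2)−1); that is, the competitive ratio (√(v²−2v+2)+1)/(√(v²−2v+2)−1) of Algorithm NoDistanceAway S/R is the minimum over u ∈ (v,1) of the worst of the two case values. -/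
/-- For every real `v` with `0 ≤ v < 1` and every `u ∈ (v,1)`,
`max(h₁(u), h₂(u)) ≥ (√(v²−2v+2)+1)/(√(v²−2v+2)−1)`. -/
theorem stmt4 (v u : ℝ) (hv0 : 0 ≤ v) (hv1 : v < 1) (hu : u ∈ Set.Ioo v 1) :
    (Real.sqrt (v ^ 2 - 2 * v + 2) + 1) / (Real.sqrt (v ^ 2 - 2 * v + 2) - 1)
      ≤ max ((2 - v + u) / (u - v)) ((3 - v + u + v * u) / ((1 - v) * (1 - u))) := by
  obtain ⟨huv, hu1⟩ := hu
  set s := Real.sqrt (v ^ 2 - 2 * v + 2) with hs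
  have hsq : s ^ 2 = v ^ 2 - 2 * v + 2 := Real.sq_sqrt (by nlinarith)
  have hs0 : 0 ≤ s := Real.sqrt_nonneg _
  have hs1 : 1 < s := by nlinarith [sq_nonneg (v - 1)]
  have huv' : 0 < u - v := sub_pos.2 huv
  have h1u : 0 < 1 - u := sub_pos.2 hu1
  have h1v : 0 < 1 - v := sub_pos.2 hv1
  rcases le_or_gt u (s - 1 + v) with h | h
  · refine le_max_of_le_left ?_
    rw [div_le_div_iff₀ (by linarith) huv']
    nlinarith
  · refine le_max_of_le_right ?_
    rw [div_le_div_iff₀ (by linarith) (by positivity)]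
    nlinarith [mul_pos h1v h1u, mul_pos h1u (sub_pos.2 h), mul_pos h1v (sub_pos.2 h), sq_nonneg (u - s + 1 - v)]
end

section
/- For every real v with 0 ≤ v < 1, the quintic p(a) := (1+v)a⁵ + 8va² + (11v−5)a + 4(v−1) has exactly one root a > 0. -/
open Set

private lemma strictConvexOn.smul' {s : Set ℝ} {f : ℝ → ℝ} {c : ℝ} (hc : 0 < c)
    (hf : StrictConvexOn ℝ s f) : StrictConvexOn ℝ s (fun x => c * f x) := by
  refine ⟨hf.1, fun x hx y hy hxy a b ha hb hab => ?_⟩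
  have := hf.2 hx hy hxy ha hb hab
  simp only [smul_eq_mul] at *
  nlinarith

/-- For every real `v` with `0 ≤ v < 1`, the quintic
`p(a) := (1+v)a⁵ + 8va² + (11v−5)a + 4(v−1)` has exactly one root `a > 0`. -/
theorem stmt6 (v : ℝ) (hv0 : 0 ≤ v) (hv1 : v < 1) :
    ∃! a : ℝ, 0 < a ∧ (1 + v) * a ^ 5 + 8 * v * a ^ 2 + (11 * v - 5) * a + 4 * (v - 1) = 0 := by
  set f : ℝ → ℝ := fun a => (1 + v) * a ^ 5 + 8 * v * a ^ 2 + (11 * v - 5) * a + 4 * (v - 1)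
    with hfdef
  have hcont : Continuous f := by fun_prop
  have hf0 : f 0 < 0 := by simp only [hfdef]; nlinarith
  have hf2 : 0 < f 2 := by simp only [hfdef]; nlinarith
  obtain ⟨a, ha, hfa⟩ := intermediate_value_Ioo (by norm_num : (0:ℝ) ≤ 2)
    hcont.continuousOn ⟨hf0, hf2⟩
  -- strict convexity of f on [0, ∞)
  have h5 : StrictConvexOn ℝ (Ici (0:ℝ)) (fun x => (1 + v) * x ^ 5) :=
    strictConvexOn.smul' (by linarith) (strictConvexOn_pow (by norm_num))
  have hrest : ConvexOn ℝ (Ici (0:ℝ)) (fun x => 8 * v * x ^ 2 + (11 * v - 5) * x + 4 * (v - 1)) := by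
    refine ⟨convex_Ici 0, fun x hx y hy p q hp hq hpq => ?_⟩
    simp only [smul_eq_mul]
    have hq1 : q = 1 - p := by linarith
    subst hq1
    nlinarith [mul_nonneg hv0 (mul_nonneg (mul_nonneg hp hq) (sq_nonneg (x - y)))]
  have hconv : StrictConvexOn ℝ (Ici (0:ℝ)) f := by
    have heq : f = (fun x => (1 + v) * x ^ 5) +
        (fun x => 8 * v * x ^ 2 + (11 * v - 5) * x + 4 * (v - 1)) := by
      funext x; simp only [hfdef, Pi.add_apply]; ring
    rw [heq]; exact h5.add_convexOn hrest
  have key : ∀ x y : ℝ, 0 < x → x < y → f x = 0 → f y = 0 → False := by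
    intro x y hx hxy hfx hfy
    have hy : 0 < y := hx.trans hxy
    have hs : 0 < x / y := div_pos hx hy
    have hs1 : x / y < 1 := (div_lt_one hy).mpr hxy
    have ht : 0 < 1 - x / y := by linarith
    have hc := hconv.2 (mem_Ici.mpr le_rfl) (mem_Ici.mpr hy.le) hy.ne ht hs (by ring)
    rw [smul_zero, zero_add, smul_eq_mul, smul_eq_mul, smul_eq_mul,
      div_mul_cancel₀ _ hy.ne'] at hc
    rw [hfx, hfy] at hc
    nlinarith
  refine ⟨a, ⟨ha.1, hfa⟩, ?_⟩
  rintro b ⟨hb, hfb⟩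
  rcases lt_trichotomy b a with h | h | h
  · exact absurd (key b a hb h hfb hfa) not_false
  · exact h
  · exact absurd (key a b ha.1 h hfa hfb) not_false
end

section
/- For every real v with 0 ≤ v < 1, the unique positive root a(v) of the quintic p(a) := (1+v)a⁵ + 8va² + (11v−5)a + 4(v−1) satisfies a(v) > 1 if and only if v < 1/3; moreover a(1/3) = 1. -/
/-- For every real `v` with `0 ≤ v < 1`, the positive root `a` of the quintic
`p(a) := (1+v)a⁵ + 8va² + (11v−5)a + 4(v−1)` satisfies `a > 1` if and only if `v < 1/3`;
moreover at `v = 1/3` the root is `a = 1`. -/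
theorem stmt7 (v : ℝ) (hv0 : 0 ≤ v) (hv1 : v < 1) :
    (∀ a : ℝ, 0 < a →
      (1 + v) * a ^ 5 + 8 * v * a ^ 2 + (11 * v - 5) * a + 4 * (v - 1) = 0 →
      (1 < a ↔ v < 1 / 3)) ∧
    (1 + (1 / 3 : ℝ)) * 1 ^ 5 + 8 * (1 / 3) * 1 ^ 2 + (11 * (1 / 3) - 5) * 1
      + 4 * ((1 / 3) - 1) = 0 := by
  refine ⟨fun a ha hp => ⟨fun h1 => ?_, fun hv => ?_⟩, by norm_num⟩
  · -- 1 < a → v < 1/3: a⁵ > a, a² > a give p(a) > 24v − 8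
    by_contra h
    push_neg at h
    nlinarith [mul_pos ha (mul_pos ha ha), sq_nonneg (a - 1), sq_nonneg (a + 1),
      mul_pos ha ha, sq_nonneg a, sq_nonneg (a^2 - 1), sq_nonneg (a^2 - a),
      mul_nonneg (mul_nonneg ha.le ha.le) (sq_nonneg (a - 1)),
      mul_nonneg (mul_nonneg (mul_nonneg ha.le ha.le) ha.le) (sq_nonneg (a - 1))]
  · -- v < 1/3 → 1 < a: if a ≤ 1 then p(a) < 0
    by_contra h
    push_neg at h
    nlinarith [mul_pos ha ha, mul_pos (mul_pos ha ha) ha, sq_nonneg (a - 1),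
      mul_nonneg (mul_nonneg ha.le ha.le) (sq_nonneg (a - 1)),
      mul_nonneg (mul_nonneg (mul_nonneg ha.le ha.le) ha.le) (sq_nonneg (a - 1)),
      mul_nonneg hv0 (mul_nonneg ha.le (sq_nonneg (a - 1)))]
end

section
/- Let a > 1, v ≥ 0, d > 0 be reals and i a natural number, and set D := (1+v)a⁴ + 2va + v − 1 (which is positive). If a^{i} ≤ (d(a⁴−1) + 2va³ + 2v)/D, then (2a^{i+5} + 2a^{i+4} − 2a³ − 2)/(d(a⁴−1)) ≤ 2a^{i}(a⁵+a⁴)/(d(a⁴−1)) ≤ 2·((d(a⁴−1) + 2va³ + 2v)/D)·((a⁵+a⁴)/(d(a⁴−1))). Moreover, the right-hand side expression, viewed as a function of d, tends to 2(a⁵+a⁴)/D as d → ∞. -/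
open Filter

set_option maxHeartbeats 2000000 in
/-- Let `a > 1`, `v ≥ 0`, `d > 0`, `i : ℕ`, and set `D := (1+v)a⁴ + 2va + v − 1`. If
`a^i ≤ (d(a⁴−1) + 2va³ + 2v)/D`, then
`(2a^{i+5} + 2a^{i+4} − 2a³ − 2)/(d(a⁴−1)) ≤ 2a^i(a⁵+a⁴)/(d(a⁴−1))
 ≤ 2((d(a⁴−1) + 2va³ + 2v)/D)((a⁵+a⁴)/(d(a⁴−1)))`, and the right-hand side, as a function
of `d`, tends to `2(a⁵+a⁴)/D` as `d → ∞`. -/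
theorem stmt9 (a v d : ℝ) (i : ℕ) (ha : 1 < a) (hv : 0 ≤ v) (hd : 0 < d)
    (h : a ^ i ≤ (d * (a ^ 4 - 1) + 2 * v * a ^ 3 + 2 * v)
      / ((1 + v) * a ^ 4 + 2 * v * a + v - 1)) :
    (2 * a ^ (i + 5) + 2 * a ^ (i + 4) - 2 * a ^ 3 - 2) / (d * (a ^ 4 - 1))
      ≤ 2 * a ^ i * (a ^ 5 + a ^ 4) / (d * (a ^ 4 - 1)) ∧
    2 * a ^ i * (a ^ 5 + a ^ 4) / (d * (a ^ 4 - 1))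
      ≤ 2 * ((d * (a ^ 4 - 1) + 2 * v * a ^ 3 + 2 * v)
          / ((1 + v) * a ^ 4 + 2 * v * a + v - 1))
        * ((a ^ 5 + a ^ 4) / (d * (a ^ 4 - 1))) ∧
    Tendsto (fun d : ℝ =>
        2 * ((d * (a ^ 4 - 1) + 2 * v * a ^ 3 + 2 * v)
            / ((1 + v) * a ^ 4 + 2 * v * a + v - 1))
          * ((a ^ 5 + a ^ 4) / (d * (a ^ 4 - 1))))
      atTop
      (nhds (2 * (a ^ 5 + a ^ 4) / ((1 + v) * a ^ 4 + 2 * v * a + v - 1))) := by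
  have ha0 : (0:ℝ) < a := lt_trans one_pos ha
  have ha4 : (0:ℝ) < a ^ 4 - 1 := by nlinarith [one_lt_pow₀ ha (by norm_num : 4 ≠ 0)]
  have hden : (0:ℝ) < d * (a ^ 4 - 1) := mul_pos hd ha4
  have hD : (0:ℝ) < (1 + v) * a ^ 4 + 2 * v * a + v - 1 := by nlinarith
  have hpow : (0:ℝ) < a ^ i := pow_pos ha0 i
  refine ⟨?_, ?_, ?_⟩
  · apply div_le_div_of_nonneg_right _ hden.le
    have : a ^ (i+5) = a ^ i * a ^ 5 := by ring
    have h2 : a ^ (i+4) = a ^ i * a ^ 4 := by ring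
    nlinarith [pow_pos ha0 3]
  · rw [mul_div_assoc]
    gcongr
  · have hC : ((1:ℝ) + v) * a ^ 4 + 2 * v * a + v - 1 ≠ 0 := ne_of_gt hD
    have key : ∀ x : ℝ, x ≠ 0 →
        2 * ((x * (a ^ 4 - 1) + 2 * v * a ^ 3 + 2 * v)
            / ((1 + v) * a ^ 4 + 2 * v * a + v - 1))
          * ((a ^ 5 + a ^ 4) / (x * (a ^ 4 - 1)))
        = 2 * (a ^ 5 + a ^ 4) / ((1 + v) * a ^ 4 + 2 * v * a + v - 1)
          + 2 * (2 * v * a ^ 3 + 2 * v) * (a ^ 5 + a ^ 4)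
              / ((1 + v) * a ^ 4 + 2 * v * a + v - 1) / (a ^ 4 - 1) * x⁻¹ := by
      intro x hx
      have h4 : a ^ 4 - 1 ≠ 0 := ne_of_gt ha4
      have hx4 : x * (a ^ 4 - 1) ≠ 0 := mul_ne_zero hx h4
      field_simp
      ring
    have hlim : Tendsto (fun x : ℝ =>
        2 * (a ^ 5 + a ^ 4) / ((1 + v) * a ^ 4 + 2 * v * a + v - 1)
          + 2 * (2 * v * a ^ 3 + 2 * v) * (a ^ 5 + a ^ 4)
              / ((1 + v) * a ^ 4 + 2 * v * a + v - 1) / (a ^ 4 - 1) * x⁻¹) atTop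
        (nhds (2 * (a ^ 5 + a ^ 4) / ((1 + v) * a ^ 4 + 2 * v * a + v - 1))) := by
      have := tendsto_inv_atTop_zero.const_mul
        (2 * (2 * v * a ^ 3 + 2 * v) * (a ^ 5 + a ^ 4)
          / ((1 + v) * a ^ 4 + 2 * v * a + v - 1) / (a ^ 4 - 1))
      simpa using tendsto_const_nhds.add this
    refine Tendsto.congr' ?_ hlim
    filter_upwards [eventually_ne_atTop 0] with x hx
    exact (key x hx).symm
end

section
/- Let d > 0 and let (y_m)_{m ≥ 0} be a sequence of nonnegative real numbers such that for every m ≥ 0, ∑_{j=0}^{m−1} y_j = (y_m − 4d·2^{2^{2m+1}} − 4d·2^{2^{2m+2}})/(4·2^{2^{2m+2}} − 2·2^{2^{2m+1}} − 2), where the empty sum for m = 0 equals 0. Then for every m ≥ 0, y_{m+1} ≤ 6·2^{2^{2m+4}}·y_m. -/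
/-- Let `d > 0` and `(y_m)` be nonnegative reals with, for every `m ≥ 0`,
`∑_{j<m} y_j = (y_m − 4d·2^{2^{2m+1}} − 4d·2^{2^{2m+2}})/(4·2^{2^{2m+2}} − 2·2^{2^{2m+1}} − 2)`.
Then for every `m ≥ 0`, `y_{m+1} ≤ 6·2^{2^{2m+4}}·y_m`. -/
theorem stmt11 (d : ℝ) (hd : 0 < d) (y : ℕ → ℝ) (hy : ∀ m, 0 ≤ y m)
    (hrec : ∀ m : ℕ, ∑ j ∈ Finset.range m, y j =
      (y m - 4 * d * (2 : ℝ) ^ (2 ^ (2 * m + 1)) - 4 * d * (2 : ℝ) ^ (2 ^ (2 * m + 2)))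
        / (4 * (2 : ℝ) ^ (2 ^ (2 * m + 2)) - 2 * (2 : ℝ) ^ (2 ^ (2 * m + 1)) - 2)) :
    ∀ m : ℕ, y (m + 1) ≤ 6 * (2 : ℝ) ^ (2 ^ (2 * m + 4)) * y m := by
  intro m
  set a : ℝ := 2 ^ (2 ^ (2 * m + 1)) with ha
  have hea : ∀ k : ℕ, (2 : ℝ) ^ (2 ^ (2 * m + 1 + k)) = a ^ (2 ^ k) := by
    intro k
    rw [ha, ← pow_mul, ← pow_add]
  have ha4 : (4 : ℝ) ≤ a := by
    rw [ha]
    calc (4 : ℝ) = 2 ^ 2 := by norm_num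
    _ ≤ 2 ^ (2 ^ (2 * m + 1)) := by
        apply pow_le_pow_right₀ (by norm_num)
        calc 2 = 2 ^ 1 := rfl
        _ ≤ 2 ^ (2 * m + 1) := Nat.pow_le_pow_right (by norm_num) (by omega)
  have ha0 : (0 : ℝ) < a := by linarith
  have hA : (0 : ℝ) ≤ a - 4 := by linarith
  have e2 : (2 : ℝ) ^ (2 ^ (2 * m + 2)) = a ^ 2 := by
    have := hea 1; norm_num at this; convert this using 3 <;> omega
  have e3 : (2 : ℝ) ^ (2 ^ (2 * (m + 1) + 1)) = a ^ 4 := by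
    have := hea 2; norm_num at this; convert this using 3 <;> omega
  have e4 : (2 : ℝ) ^ (2 ^ (2 * (m + 1) + 2)) = a ^ 8 := by
    have := hea 3; norm_num at this; convert this using 3 <;> omega
  have e5 : (2 : ℝ) ^ (2 ^ (2 * m + 4)) = a ^ 8 := by
    have := hea 3; norm_num at this; convert this using 3 <;> omega
  have h1 := hrec m
  have h2 := hrec (m + 1)
  rw [e2, ← ha] at h1
  rw [e3, e4] at h2
  have hD1 : (0 : ℝ) < 4 * a ^ 2 - 2 * a - 2 := by nlinarith [mul_nonneg hA ha0.le]
  have hb4 : (4 : ℝ) ≤ a ^ 4 := by nlinarith [pow_nonneg ha0.le 2, pow_nonneg ha0.le 3]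
  have hD2 : (0 : ℝ) < 4 * a ^ 8 - 2 * a ^ 4 - 2 := by
    nlinarith [mul_nonneg (by linarith : (0:ℝ) ≤ a ^ 4 - 4) (pow_nonneg ha0.le 4)]
  have hS : 0 ≤ ∑ j ∈ Finset.range m, y j :=
    Finset.sum_nonneg fun j _ => hy j
  rw [eq_div_iff (by linarith : (4 * a ^ 2 - 2 * a - 2 : ℝ) ≠ 0)] at h1
  rw [Finset.sum_range_succ,
    eq_div_iff (by linarith : (4 * a ^ 8 - 2 * a ^ 4 - 2 : ℝ) ≠ 0)] at h2
  rw [e5]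
  set S := ∑ j ∈ Finset.range m, y j
  have ht : 0 ≤ y m - 4 * d * a - 4 * d * a ^ 2 := by
    rw [← h1]; positivity
  -- key polynomial inequalities
  have key1 : (4 * a ^ 8 - 2 * a ^ 4 - 2) * (1 + (4 * a ^ 2 - 2 * a - 2)) ≤
      6 * a ^ 8 * (4 * a ^ 2 - 2 * a - 2) := by
    nlinarith [mul_nonneg hA (pow_nonneg ha0.le 9), mul_nonneg hA (pow_nonneg ha0.le 8),
      mul_nonneg hA (pow_nonneg ha0.le 7), mul_nonneg hA (pow_nonneg ha0.le 5),
      mul_nonneg hA (pow_nonneg ha0.le 4), mul_nonneg hA (pow_nonneg ha0.le 3),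
      mul_nonneg hA (pow_nonneg ha0.le 1), mul_nonneg hA ha0.le,
      pow_nonneg ha0.le 6, pow_nonneg ha0.le 2]
  have key2 : (a + a ^ 2) * (4 * a ^ 8 - 2 * a ^ 4 - 2) + a ^ 4 + a ^ 8 ≤
      6 * a ^ 8 * (a + a ^ 2) := by
    nlinarith [mul_nonneg hA (pow_nonneg ha0.le 9), mul_nonneg hA (pow_nonneg ha0.le 8),
      mul_nonneg hA (pow_nonneg ha0.le 7), mul_nonneg hA (pow_nonneg ha0.le 5),
      mul_nonneg hA (pow_nonneg ha0.le 4), mul_nonneg hA (pow_nonneg ha0.le 3),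
      pow_nonneg ha0.le 6, pow_nonneg ha0.le 2, ha0.le]
  have q2 : (S + y m) * (4 * a ^ 8 - 2 * a ^ 4 - 2) * (4 * a ^ 2 - 2 * a - 2) =
      (y (m + 1) - 4 * d * a ^ 4 - 4 * d * a ^ 8) * (4 * a ^ 2 - 2 * a - 2) := by
    rw [h2]
  have q3 : S * (4 * a ^ 2 - 2 * a - 2) * (4 * a ^ 8 - 2 * a ^ 4 - 2) =
      (y m - 4 * d * a - 4 * d * a ^ 2) * (4 * a ^ 8 - 2 * a ^ 4 - 2) := by
    rw [h1]
  have p1 := mul_le_mul_of_nonneg_left key1 ht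
  have p2 := mul_le_mul_of_nonneg_left key2
    (by positivity : (0:ℝ) ≤ 4 * d * (4 * a ^ 2 - 2 * a - 2))
  have goal' : y (m + 1) * (4 * a ^ 2 - 2 * a - 2) ≤
      6 * a ^ 8 * y m * (4 * a ^ 2 - 2 * a - 2) := by linarith [p1, p2, q2, q3]
  exact le_of_mul_le_mul_right goal' hD1
end

section
/- Let 0 ≤ v < 1 and d > 0 be reals, and let S, R : [0,∞) → ℝ be 1-Lipschitz functions with S(0) = R(0) = 0. Then there exists σ ∈ {−1, +1} such that every t ≥ 0 satisfying S(t) = σ(d + vt) and R(t) = σ(d + vt) also satisfies t ≥ d/(1−v) + 2d/(1−v)². Consequently, every such pair of trajectories has competitive ratio at least 1 + 2/(1−v) in the away model. -/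
/-- Let `0 ≤ v < 1`, `d > 0`, and let `S, R` be 1-Lipschitz trajectories on `[0,∞)` starting
at the origin. Then there is a sign `σ ∈ {−1,+1}` such that every time `t ≥ 0` at which both
robots are co-located with the target `σ(d + vt)` satisfies `t ≥ d/(1−v) + 2d/(1−v)²`;
consequently the competitive ratio (capture time over the optimal `d/(1−v)`) is at least
`1 + 2/(1−v)`. -/
theorem stmt14 (v d : ℝ) (hv0 : 0 ≤ v) (hv1 : v < 1) (hd : 0 < d)
    (S R : ℝ → ℝ)
    (hS : LipschitzOnWith 1 S (Set.Ici 0)) (hR : LipschitzOnWith 1 R (Set.Ici 0))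
    (hS0 : S 0 = 0) (hR0 : R 0 = 0) :
    ∃ σ : ℝ, (σ = -1 ∨ σ = 1) ∧
      ∀ t : ℝ, 0 ≤ t → S t = σ * (d + v * t) → R t = σ * (d + v * t) →
        d / (1 - v) + 2 * d / (1 - v) ^ 2 ≤ t ∧
        1 + 2 / (1 - v) ≤ t / (d / (1 - v)) := by
  have h1v : (0:ℝ) < 1 - v := by linarith
  set D : ℝ := d / (1 - v) + 2 * d / (1 - v) ^ 2 with hDdef
  -- basic lower bound: any capture time is at least d/(1-v)
  have hlow : ∀ σ t : ℝ, |σ| = 1 → 0 ≤ t → S t = σ * (d + v * t) →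
      d / (1 - v) ≤ t := by
    intro σ t hσ ht hst
    have h := hS.dist_le_mul t (Set.mem_Ici.mpr ht) 0 Set.self_mem_Ici
    rw [hS0, hst, Real.dist_eq, Real.dist_eq, sub_zero, sub_zero, abs_mul, hσ] at h
    have hdv : 0 ≤ d + v * t := by positivity
    rw [abs_of_nonneg hdv, abs_of_nonneg ht] at h
    push_cast at h
    rw [div_le_iff₀ h1v]
    linarith
  -- ratio consequence
  have hratio : ∀ t : ℝ, D ≤ t → 1 + 2 / (1 - v) ≤ t / (d / (1 - v)) := by
    intro t hDt
    have hpos : 0 < d / (1 - v) := div_pos hd h1v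
    rw [le_div_iff₀ hpos]
    have : (1 + 2 / (1 - v)) * (d / (1 - v)) = D := by
      rw [hDdef]; field_simp
    rw [this]; exact hDt
  by_cases hc : ∃ t₁ : ℝ, 0 ≤ t₁ ∧ S t₁ = 1 * (d + v * t₁) ∧
      R t₁ = 1 * (d + v * t₁) ∧ t₁ < D
  · -- a fast capture on the + side exists; choose σ = -1
    obtain ⟨t₁, ht₁0, hS1, _, ht₁D⟩ := hc
    refine ⟨-1, Or.inl rfl, ?_⟩
    intro t ht hst hrt
    have hkey : D ≤ t := by
      have h := hS.dist_le_mul t (Set.mem_Ici.mpr ht) t₁ (Set.mem_Ici.mpr ht₁0)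
      rw [hst, hS1, Real.dist_eq, Real.dist_eq] at h
      have habs : |(-1) * (d + v * t) - 1 * (d + v * t₁)| = 2*d + v*t + v*t₁ := by
        have : (-1) * (d + v * t) - 1 * (d + v * t₁) = -(2*d + v*t + v*t₁) := by ring
        rw [this, abs_neg, abs_of_nonneg]; positivity
      rw [habs] at h
      have h2 : 2*d + v*t + v*t₁ ≤ |t - t₁| := by simpa using h
      have hl1 : d / (1 - v) ≤ t₁ := hlow 1 t₁ (by norm_num) ht₁0 hS1
      have hl1' : d ≤ (1 - v) * t₁ := by
        rw [div_le_iff₀ h1v] at hl1; linarith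
      rcases le_or_gt t₁ t with hle | hlt
      · rw [abs_of_nonneg (by linarith)] at h2
        -- (1-v) t ≥ 2d + (1+v) t₁
        have : (1 - v) * t ≥ 2*d + (1+v) * t₁ := by nlinarith
        have hD : D * (1 - v)^2 = d * (3 - v) := by
          rw [hDdef]; field_simp; ring
        nlinarith [sq_nonneg (1 - v), mul_pos h1v h1v]
      · exfalso
        rw [abs_of_nonpos (by linarith)] at h2
        have hl2 : d / (1 - v) ≤ t := hlow (-1) t (by norm_num) ht hst
        have hl2' : d ≤ (1 - v) * t := by rw [div_le_iff₀ h1v] at hl2; linarith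
        have : (1 - v) * t₁ ≥ 2*d + (1+v) * t := by nlinarith
        have hD : D * (1 - v)^2 = d * (3 - v) := by
          rw [hDdef]; field_simp; ring
        have ht₁D' : t₁ * (1-v)^2 < d * (3 - v) := by
          calc t₁ * (1-v)^2 < D * (1-v)^2 := by nlinarith [mul_pos h1v h1v]
            _ = d * (3 - v) := hD
        nlinarith [mul_pos h1v h1v]
    exact ⟨hkey, hratio t hkey⟩
  · -- no fast capture on the + side; choose σ = 1
    push_neg at hc
    refine ⟨1, Or.inr rfl, ?_⟩
    intro t ht hst hrt
    have hkey : D ≤ t := hc t ht hst hrt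
    exact ⟨hkey, hratio t hkey⟩
end

section
/- For every real v with 0 < v < 1, the inequality (√(v²+2v+2)+1)/(√(v²+2v+2)−1) ≤ 1 + 1/v holds if and only if v ≤ 1/3, with equality if and only if v = 1/3 (where both sides equal 4). -/
/-- For every real `v` with `0 < v < 1`,
`(√(v²+2v+2)+1)/(√(v²+2v+2)−1) ≤ 1 + 1/v` iff `v ≤ 1/3`, with equality iff `v = 1/3`,
where both sides equal `4`. -/
theorem stmt15 (v : ℝ) (hv0 : 0 < v) (hv1 : v < 1) :
    ((Real.sqrt (v ^ 2 + 2 * v + 2) + 1) / (Real.sqrt (v ^ 2 + 2 * v + 2) - 1) ≤ 1 + 1 / v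
      ↔ v ≤ 1 / 3) ∧
    ((Real.sqrt (v ^ 2 + 2 * v + 2) + 1) / (Real.sqrt (v ^ 2 + 2 * v + 2) - 1) = 1 + 1 / v
      ↔ v = 1 / 3) ∧
    (v = 1 / 3 →
      (Real.sqrt (v ^ 2 + 2 * v + 2) + 1) / (Real.sqrt (v ^ 2 + 2 * v + 2) - 1) = 4 ∧
      1 + 1 / v = 4) := by
  set s := Real.sqrt (v ^ 2 + 2 * v + 2) with hs
  have hnn : (0:ℝ) ≤ v ^ 2 + 2 * v + 2 := by nlinarith
  have hs0 : 0 ≤ s := Real.sqrt_nonneg _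
  have hsq : s ^ 2 = v ^ 2 + 2 * v + 2 := Real.sq_sqrt hnn
  have hs1 : 1 < s := by nlinarith
  have hsub : 0 < s - 1 := by linarith
  refine ⟨?_, ?_, ?_⟩
  · rw [show (1 : ℝ) + 1 / v = (v + 1) / v by field_simp,
      div_le_div_iff₀ hsub hv0]
    constructor
    · intro h
      nlinarith [sq_nonneg (s - (2 * v + 1))]
    · intro h
      have h2 : 2 * v + 1 ≤ s := by nlinarith [sq_nonneg (s - (2 * v + 1))]
      nlinarith
  · rw [show (1 : ℝ) + 1 / v = (v + 1) / v by field_simp,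
      div_eq_div_iff (by linarith) (ne_of_gt hv0)]
    constructor
    · intro h
      have h2 : s = 2 * v + 1 := by nlinarith
      nlinarith
    · intro h
      have h2 : s = 2 * v + 1 := by nlinarith [sq_nonneg (s - (2 * v + 1))]
      nlinarith
  · intro h
    subst h
    have : s = 5 / 3 := by nlinarith
    rw [this]
    norm_num
end

section
/- Let 0 < v ≤ 1 and d > 0 be reals, and let S, R : [0,∞) → ℝ be 1-Lipschitz functions with S(0) = R(0) = 0. Then for all t₊, t₋ ≥ 0 such that S(t₊) = R(t₊) = d − v·t₊ and S(t₋) = R(t₋) = −(d − v·t₋), one has max(t₊, t₋) ≥ (3+v)·d/(1+v)². In particular, max(t₊,t₋)/(d/(1+v)) ≥ (3+v)/(1+v), which tends to 3 as v → 0⁺. -/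
open Filter

/-- Let `0 < v ≤ 1`, `d > 0`, and let `S, R` be 1-Lipschitz trajectories on `[0,∞)` starting
at the origin. For all `t₊, t₋ ≥ 0` with `S(t₊) = R(t₊) = d − vt₊` and
`S(t₋) = R(t₋) = −(d − vt₋)`, one has `max(t₊,t₋) ≥ (3+v)d/(1+v)²`; in particular
`max(t₊,t₋)/(d/(1+v)) ≥ (3+v)/(1+v)`, which tends to `3` as `v → 0⁺`. -/
theorem stmt18 (v d : ℝ) (hv0 : 0 < v) (hv1 : v ≤ 1) (hd : 0 < d)
    (S R : ℝ → ℝ)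
    (hS : LipschitzOnWith 1 S (Set.Ici 0)) (hR : LipschitzOnWith 1 R (Set.Ici 0))
    (hS0 : S 0 = 0) (hR0 : R 0 = 0) :
    (∀ tp tm : ℝ, 0 ≤ tp → 0 ≤ tm →
      S tp = d - v * tp → R tp = d - v * tp →
      S tm = -(d - v * tm) → R tm = -(d - v * tm) →
      (3 + v) * d / (1 + v) ^ 2 ≤ max tp tm ∧
      (3 + v) / (1 + v) ≤ max tp tm / (d / (1 + v))) ∧
    Tendsto (fun w : ℝ => (3 + w) / (1 + w)) (nhdsWithin 0 (Set.Ioi 0)) (nhds 3) := by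
  constructor
  · intro tp tm htp htm hSp hRp hSm hRm
    have h1v : (0:ℝ) < 1 + v := by linarith
    have hb1 : d ≤ (1 + v) * tp := by
      have h := hS.dist_le_mul tp (Set.mem_Ici.2 htp) 0 (Set.mem_Ici.2 le_rfl)
      rw [hS0, hSp] at h
      simp [Real.dist_eq, abs_of_nonneg htp] at h
      have := neg_abs_le (d - v * tp)
      have := le_abs_self (d - v * tp)
      nlinarith
    have hb2 : d ≤ (1 + v) * tm := by
      have h := hS.dist_le_mul tm (Set.mem_Ici.2 htm) 0 (Set.mem_Ici.2 le_rfl)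
      rw [hS0, hSm] at h
      simp [Real.dist_eq, abs_of_nonneg htm] at h
      rw [abs_sub_comm] at h
      have := le_abs_self (d - v * tm)
      nlinarith
    have key : 2 * d - v * tp - v * tm ≤ |tp - tm| := by
      have h := hS.dist_le_mul tp (Set.mem_Ici.2 htp) tm (Set.mem_Ici.2 htm)
      rw [hSp, hSm] at h
      simp [Real.dist_eq] at h
      have := le_abs_self (d - v * tp + d - v * tm)
      linarith
    have hmain : (3 + v) * d / (1 + v) ^ 2 ≤ max tp tm := by
      rw [div_le_iff₀ (by positivity)]
      rcases le_total tp tm with hle | hle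
      · rw [max_eq_right hle]
        rw [abs_of_nonpos (by linarith)] at key
        nlinarith [mul_le_mul_of_nonneg_left hb1 (by linarith : (0:ℝ) ≤ 1 - v)]
      · rw [max_eq_left hle]
        rw [abs_of_nonneg (by linarith)] at key
        nlinarith [mul_le_mul_of_nonneg_left hb2 (by linarith : (0:ℝ) ≤ 1 - v)]
    refine ⟨hmain, ?_⟩
    rw [le_div_iff₀ (by positivity)]
    calc (3 + v) / (1 + v) * (d / (1 + v)) = (3 + v) * d / (1 + v) ^ 2 := by
          field_simp
      _ ≤ max tp tm := hmain
  · have hc : ContinuousAt (fun w : ℝ => (3 + w) / (1 + w)) 0 := by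
      apply ContinuousAt.div
      · exact continuousAt_const.add continuousAt_id
      · exact continuousAt_const.add continuousAt_id
      · norm_num
    have := hc.continuousWithinAt (s := Set.Ioi (0:ℝ))
    simpa using this.tendsto
end

section
/- Let (y_m)_{m ≥ 0} be a sequence of nonnegative real numbers such that for every m ≥ 0, ∑_{j=0}^{m−1} y_j = (y_m − 4·2^{2^{2m+1}}·2^{2^{2m+1}} − 4·2^{2^{2m+1}}·2^{2^{2m+2}})/(4·2^{2^{2m+2}} − 2·2^{2^{2m+1}} − 2), where the empty sum for m = 0 equals 0. Then for every m ≥ 0, y_{m+1} ≤ 6·2^{2^{2m+4}}·y_m + 4·2^{2^{2m+4}}·2^{2^{2m+3}}. -/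
/-- Let `(y_m)` be nonnegative reals with, for every `m ≥ 0`,
`∑_{j<m} y_j = (y_m − 4·2^{2^{2m+1}}·2^{2^{2m+1}} − 4·2^{2^{2m+1}}·2^{2^{2m+2}})
              /(4·2^{2^{2m+2}} − 2·2^{2^{2m+1}} − 2)`.
Then for every `m ≥ 0`, `y_{m+1} ≤ 6·2^{2^{2m+4}}·y_m + 4·2^{2^{2m+4}}·2^{2^{2m+3}}`. -/
theorem stmt19 (y : ℕ → ℝ) (hy : ∀ m, 0 ≤ y m)
    (hrec : ∀ m : ℕ, ∑ j ∈ Finset.range m, y j =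
      (y m - 4 * (2 : ℝ) ^ (2 ^ (2 * m + 1)) * (2 : ℝ) ^ (2 ^ (2 * m + 1))
            - 4 * (2 : ℝ) ^ (2 ^ (2 * m + 1)) * (2 : ℝ) ^ (2 ^ (2 * m + 2)))
        / (4 * (2 : ℝ) ^ (2 ^ (2 * m + 2)) - 2 * (2 : ℝ) ^ (2 ^ (2 * m + 1)) - 2)) :
    ∀ m : ℕ, y (m + 1) ≤ 6 * (2 : ℝ) ^ (2 ^ (2 * m + 4)) * y m
      + 4 * (2 : ℝ) ^ (2 ^ (2 * m + 4)) * (2 : ℝ) ^ (2 ^ (2 * m + 3)) := by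
  intro m
  have h1 := hrec m
  have h2 := hrec (m + 1)
  rw [show 2 * (m + 1) + 1 = 2 * m + 3 from by ring,
      show 2 * (m + 1) + 2 = 2 * m + 4 from by ring, Finset.sum_range_succ] at h2
  have e2 : (2 : ℝ) ^ (2 ^ (2 * m + 2)) = ((2 : ℝ) ^ (2 ^ (2 * m + 1))) ^ 2 := by
    rw [show 2 ^ (2 * m + 2) = 2 ^ (2 * m + 1) * 2 from by ring, pow_mul]
  have e3 : (2 : ℝ) ^ (2 ^ (2 * m + 3)) = ((2 : ℝ) ^ (2 ^ (2 * m + 1))) ^ 4 := by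
    rw [show 2 ^ (2 * m + 3) = 2 ^ (2 * m + 1) * 4 from by ring, pow_mul]
  have e4 : (2 : ℝ) ^ (2 ^ (2 * m + 4)) = ((2 : ℝ) ^ (2 ^ (2 * m + 1))) ^ 8 := by
    rw [show 2 ^ (2 * m + 4) = 2 ^ (2 * m + 1) * 8 from by ring, pow_mul]
  rw [e2] at h1
  rw [e3, e4] at h2 ⊢
  have ht4 : (4 : ℝ) ≤ (2 : ℝ) ^ (2 ^ (2 * m + 1)) := by
    calc (4 : ℝ) = 2 ^ 2 := by norm_num
    _ ≤ 2 ^ 2 ^ (2 * m + 1) := by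
        apply pow_le_pow_right₀ (by norm_num)
        calc 2 = 2 ^ 1 := by norm_num
        _ ≤ 2 ^ (2 * m + 1) := Nat.pow_le_pow_right (by norm_num) (by omega)
  generalize hgen : ((2 : ℝ) ^ (2 ^ (2 * m + 1))) = t at h1 h2 ht4 ⊢
  have ht0 : (0 : ℝ) ≤ t := by linarith
  have ht1 : (1 : ℝ) ≤ t := by linarith
  have h21 : (0 : ℝ) ≤ t ^ 2 - 1 := by nlinarith
  have h44 : (256 : ℝ) ≤ t ^ 4 := by
    calc (256 : ℝ) = 4 ^ 4 := by norm_num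
    _ ≤ t ^ 4 := pow_le_pow_left₀ (by norm_num) ht4 4
  have h81 : (0 : ℝ) ≤ t ^ 8 - 1 := by nlinarith [pow_le_pow_left₀ (by norm_num : (0:ℝ) ≤ 1) ht1 8]
  have h91 : (0 : ℝ) ≤ t ^ 9 - 1 := by nlinarith [pow_le_pow_left₀ (by norm_num : (0:ℝ) ≤ 1) ht1 9]
  have hDm : (0 : ℝ) < 4 * t ^ 2 - 2 * t - 2 := by nlinarith
  have hD' : (0 : ℝ) < 4 * t ^ 8 - 2 * t ^ 4 - 2 := by
    nlinarith [mul_nonneg (pow_nonneg ht0 4) (by linarith : (0:ℝ) ≤ t ^ 4 - 1)]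
  have h1' : (∑ j ∈ Finset.range m, y j) * (4 * t ^ 2 - 2 * t - 2)
      = y m - 4 * t * t - 4 * t * t ^ 2 := by
    rw [h1, div_mul_cancel₀ _ hDm.ne']
  have h2' : (∑ j ∈ Finset.range m, y j + y m) * (4 * t ^ 8 - 2 * t ^ 4 - 2)
      = y (m + 1) - 4 * t ^ 4 * t ^ 4 - 4 * t ^ 4 * t ^ 8 := by
    rw [h2, div_mul_cancel₀ _ hD'.ne']
  have hq : (0 : ℝ) ≤ 8 * t ^ 2 - 4 * t - 8 := by nlinarith
  have hA : (1 + (4 * t ^ 2 - 2 * t - 2)) * (4 * t ^ 8 - 2 * t ^ 4 - 2)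
      ≤ 6 * t ^ 8 * (4 * t ^ 2 - 2 * t - 2) := by
    nlinarith [mul_nonneg (pow_nonneg ht0 8) hq, mul_nonneg (pow_nonneg ht0 4) hq,
      pow_nonneg ht0 4]
  have hB : (4 * t ^ 4 * t ^ 4 + 4 * t ^ 4 * t ^ 8) * (4 * t ^ 2 - 2 * t - 2)
      - (4 * t * t + 4 * t * t ^ 2) * (4 * t ^ 8 - 2 * t ^ 4 - 2)
      ≤ 4 * t ^ 8 * t ^ 4 * (4 * t ^ 2 - 2 * t - 2) := by
    nlinarith [mul_nonneg (pow_nonneg ht0 7) h21, mul_nonneg (pow_nonneg ht0 6) h21,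
      mul_nonneg (pow_nonneg ht0 3) h81, mul_nonneg (pow_nonneg ht0 2) h91]
  have hy' := hy m
  have key : y (m + 1) * (4 * t ^ 2 - 2 * t - 2)
      ≤ (6 * t ^ 8 * y m + 4 * t ^ 8 * t ^ 4) * (4 * t ^ 2 - 2 * t - 2) := by
    have expand : y (m + 1) * (4 * t ^ 2 - 2 * t - 2)
        = ((y m - 4 * t * t - 4 * t * t ^ 2) + y m * (4 * t ^ 2 - 2 * t - 2))
            * (4 * t ^ 8 - 2 * t ^ 4 - 2)
          + (4 * t ^ 4 * t ^ 4 + 4 * t ^ 4 * t ^ 8) * (4 * t ^ 2 - 2 * t - 2) := by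
      linear_combination (4 * t ^ 8 - 2 * t ^ 4 - 2) * h1' - (4 * t ^ 2 - 2 * t - 2) * h2'
    rw [expand]
    have hAy := mul_le_mul_of_nonneg_left hA hy'
    calc ((y m - 4 * t * t - 4 * t * t ^ 2) + y m * (4 * t ^ 2 - 2 * t - 2))
            * (4 * t ^ 8 - 2 * t ^ 4 - 2)
          + (4 * t ^ 4 * t ^ 4 + 4 * t ^ 4 * t ^ 8) * (4 * t ^ 2 - 2 * t - 2)
        = y m * ((1 + (4 * t ^ 2 - 2 * t - 2)) * (4 * t ^ 8 - 2 * t ^ 4 - 2))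
          + ((4 * t ^ 4 * t ^ 4 + 4 * t ^ 4 * t ^ 8) * (4 * t ^ 2 - 2 * t - 2)
            - (4 * t * t + 4 * t * t ^ 2) * (4 * t ^ 8 - 2 * t ^ 4 - 2)) := by ring
      _ ≤ y m * (6 * t ^ 8 * (4 * t ^ 2 - 2 * t - 2))
          + 4 * t ^ 8 * t ^ 4 * (4 * t ^ 2 - 2 * t - 2) := add_le_add hAy hB
      _ = (6 * t ^ 8 * y m + 4 * t ^ 8 * t ^ 4) * (4 * t ^ 2 - 2 * t - 2) := by ring
  exact le_of_mul_le_mul_right key hDm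
end
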